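/- If Γ ⊢_{NWFC} A then Γ ⊢_{HWFC} A; that is, every formula derivable from Γ in the natural deduction system NWFC is derivable from Γ in the restricted Hilbert system WFC. -/

import Mathlib

/-- Formulas of subintuitionistic propositional logic. -/
inductive Fml : Type
  | atom : ℕ → Fml
  | bot  : Fml
  | and  : Fml → Fml → Fml
  | or   : Fml → Fml → Fml
  | imp  : Fml → Fml → Fml
deriving DecidableEq

/-- `A ↔ B` abbreviates `(A → B) ∧ (B → A)`. -/
def Fml.biimp (A B : Fml) : Fml := (A.imp B).and (B.imp A)

/-- The extra axiom schemes / rules among I, C, D, Ĉ, D̂, N, N₂. -/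
inductive ExtAx : Type
  | I | C | D | Chat | Dhat | N | N2
deriving DecidableEq

/-- Theorems of the Hilbert system WF extended with the schemes/rules in `E`
(derivations with no assumptions; all rules unrestricted here). -/
inductive HThm (E : Set ExtAx) : Fml → Prop
  | ax1 (A B : Fml)   : HThm E (A.imp (A.or B))
  | ax2 (A B : Fml)   : HThm E (B.imp (A.or B))
  | ax3 (A B : Fml)   : HThm E ((A.and B).imp A)
  | ax4 (A B : Fml)   : HThm E ((A.and B).imp B)
  | ax7 (A B C : Fml) : HThm E ((A.and (B.or C)).imp ((A.and B).or (A.and C)))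
  | ax8 (A : Fml)     : HThm E (A.imp A)
  | ax14 (A : Fml)    : HThm E (Fml.bot.imp A)
  | mp {A B : Fml}    : HThm E A → HThm E (A.imp B) → HThm E B
  | af {A : Fml} (B : Fml) : HThm E A → HThm E (B.imp A)
  | tr {A B C : Fml}  : HThm E (A.imp B) → HThm E (B.imp C) → HThm E (A.imp C)
  | rc {A B C : Fml}  : HThm E (A.imp B) → HThm E (A.imp C) → HThm E (A.imp (B.and C))
  | rd {A B C : Fml}  : HThm E (A.imp C) → HThm E (B.imp C) → HThm E ((A.or B).imp C)
  | conj {A B : Fml}  : HThm E A → HThm E B → HThm E (A.and B)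
  | re {A B C D : Fml} : HThm E (A.biimp B) → HThm E (C.biimp D) →
      HThm E ((A.imp C).biimp (B.imp D))
  | axI (A B C : Fml) : ExtAx.I ∈ E →
      HThm E (((A.imp B).and (B.imp C)).imp (A.imp C))
  | axC (A B C : Fml) : ExtAx.C ∈ E →
      HThm E (((A.imp B).and (A.imp C)).imp (A.imp (B.and C)))
  | axD (A B C : Fml) : ExtAx.D ∈ E →
      HThm E (((A.imp C).and (B.imp C)).imp ((A.or B).imp C))
  | axChat (A B C : Fml) : ExtAx.Chat ∈ E →
      HThm E ((A.imp (B.and C)).imp ((A.imp B).and (A.imp C)))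
  | axDhat (A B C : Fml) : ExtAx.Dhat ∈ E →
      HThm E (((A.or B).imp C).imp ((A.imp C).and (B.imp C)))
  | ruleN {A B C D : Fml} : ExtAx.N ∈ E →
      HThm E (A.imp (B.or C)) → HThm E (C.imp (A.or D)) →
      HThm E ((A.and D).imp B) → HThm E ((C.and B).imp D) →
      HThm E ((A.imp B).biimp (C.imp D))
  | ruleN2 {A B C D : Fml} : ExtAx.N2 ∈ E →
      HThm E (C.imp (A.or D)) → HThm E ((C.and B).imp D) →
      HThm E ((A.imp B).imp (C.imp D))

/-- Restricted derivability from assumptions in the Hilbert system WF + `E`: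
besides assumptions and theorems, only the conjunction rule is unrestricted, and
modus ponens may be used only when the major premise `A → B` is a theorem
(derived with no assumptions); all other rules are confined to theorems. -/
inductive HDer (E : Set ExtAx) (Γ : Set Fml) : Fml → Prop
  | hyp {A : Fml}  : A ∈ Γ → HDer E Γ A
  | thm {A : Fml}  : HThm E A → HDer E Γ A
  | conj {A B : Fml} : HDer E Γ A → HDer E Γ B → HDer E Γ (A.and B)
  | mp {A B : Fml} : HDer E Γ A → HThm E (A.imp B) → HDer E Γ B

/-- Tags for the optional implication-introduction rules of the natural
deduction systems. -/
inductive NRule : Type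
  | impI1 | impI2 | impN | impN2 | impChat | impDhat | impAnd | impOr | impTr
deriving DecidableEq

/-- Natural deduction derivations for the system with optional rules `R`.
`Deriv R Γ A` is a derivation of `A` all of whose open assumptions lie in `Γ`. -/
inductive Deriv (R : Set NRule) : Set Fml → Fml → Type
  | hyp (Γ : Set Fml) (A : Fml) : A ∈ Γ → Deriv R Γ A
  | andI {Γ : Set Fml} {A B : Fml} :
      Deriv R Γ A → Deriv R Γ B → Deriv R Γ (A.and B)
  | andE1 {Γ : Set Fml} {A B : Fml} :
      Deriv R Γ (A.and B) → Deriv R Γ A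
  | andE2 {Γ : Set Fml} {A B : Fml} :
      Deriv R Γ (A.and B) → Deriv R Γ B
  | orI1 {Γ : Set Fml} {A : Fml} (B : Fml) :
      Deriv R Γ A → Deriv R Γ (A.or B)
  | orI2 {Γ : Set Fml} (A : Fml) {B : Fml} :
      Deriv R Γ B → Deriv R Γ (A.or B)
  | orE {Γ : Set Fml} {A B C : Fml} :
      Deriv R Γ (A.or B) → Deriv R (insert A Γ) C → Deriv R (insert B Γ) C →
      Deriv R Γ C
  | botE {Γ : Set Fml} (A : Fml) :
      Deriv R Γ Fml.bot → Deriv R Γ A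
  | impI {Γ : Set Fml} {A B : Fml} :
      Deriv R {A} B → Deriv R Γ (A.imp B)
  | impE {Γ : Set Fml} {A B : Fml} :
      Deriv R Γ A → Deriv R (∅ : Set Fml) (A.imp B) → Deriv R Γ B
  | impI1 {Γ : Set Fml} {A B D : Fml} :
      NRule.impI1 ∈ R → Deriv R {B} D → Deriv R {D} B →
      Deriv R Γ ((A.imp B).imp (A.imp D))
  | impI2 {Γ : Set Fml} {A B D : Fml} :
      NRule.impI2 ∈ R → Deriv R {B} D → Deriv R {D} B →
      Deriv R Γ ((B.imp A).imp (D.imp A))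
  | impIN {Γ : Set Fml} {A B C D : Fml} :
      NRule.impN ∈ R →
      Deriv R {A} (C.or B) → Deriv R {D} B → Deriv R {C} (A.or D) → Deriv R {B} D →
      Deriv R Γ ((A.imp B).imp (C.imp D))
  | impIN2 {Γ : Set Fml} {A B C D : Fml} :
      NRule.impN2 ∈ R →
      Deriv R {C} (A.or D) → Deriv R {B} D →
      Deriv R Γ ((A.imp B).imp (C.imp D))
  | impIChat {Γ : Set Fml} {A B : Fml} (C : Fml) :
      NRule.impChat ∈ R → Deriv R {A} B →
      Deriv R Γ ((C.imp A).imp (C.imp B))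
  | impIDhat {Γ : Set Fml} {A B : Fml} (C : Fml) :
      NRule.impDhat ∈ R → Deriv R {A} B →
      Deriv R Γ ((B.imp C).imp (A.imp C))
  | impIAnd {Γ : Set Fml} {A B C : Fml} :
      NRule.impAnd ∈ R → Deriv R Γ (A.imp B) → Deriv R Γ (A.imp C) →
      Deriv R Γ (A.imp (B.and C))
  | impIOr {Γ : Set Fml} {A B C : Fml} :
      NRule.impOr ∈ R → Deriv R Γ (A.imp C) → Deriv R Γ (B.imp C) →
      Deriv R Γ ((A.or B).imp C)
  | impITr {Γ : Set Fml} {A B C : Fml} :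
      NRule.impTr ∈ R → Deriv R Γ (A.imp B) → Deriv R Γ (B.imp C) →
      Deriv R Γ (A.imp C)

/-- `Γ ⊢ A` in the natural deduction system with optional rules `R`. -/
def NDer (R : Set NRule) (Γ : Set Fml) (A : Fml) : Prop :=
  Nonempty (Deriv R Γ A)

/-- A derivation may serve as the major premise of an elimination rule in a
normal derivation: it is an assumption or ends with an elimination rule
different from ∨E (i.e. ∧E or →E). -/
def Deriv.MajorOK : ∀ {R : Set NRule} {Γ : Set Fml} {A : Fml}, Deriv R Γ A → Prop
  | _, _, _, .hyp _ _ _ => True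
  | _, _, _, .andE1 _   => True
  | _, _, _, .andE2 _   => True
  | _, _, _, .impE _ _  => True
  | _, _, _, _          => False

/-- A derivation is normal if every major premise of an elimination rule is
either an assumption or the conclusion of an elimination rule different
from ∨E. -/
def Deriv.Normal {R : Set NRule} : ∀ {Γ : Set Fml} {A : Fml}, Deriv R Γ A → Prop
  | _, _, .hyp _ _ _ => True
  | _, _, .andI d e => d.Normal ∧ e.Normal
  | _, _, .andE1 d => d.MajorOK ∧ d.Normal
  | _, _, .andE2 d => d.MajorOK ∧ d.Normal
  | _, _, .orI1 _ d => d.Normal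
  | _, _, .orI2 _ d => d.Normal
  | _, _, .orE d e f => d.MajorOK ∧ d.Normal ∧ e.Normal ∧ f.Normal
  | _, _, .botE _ d => d.Normal
  | _, _, .impI d => d.Normal
  | _, _, .impE d e => e.MajorOK ∧ d.Normal ∧ e.Normal
  | _, _, .impI1 _ d e => d.Normal ∧ e.Normal
  | _, _, .impI2 _ d e => d.Normal ∧ e.Normal
  | _, _, .impIN _ d e f g => d.Normal ∧ e.Normal ∧ f.Normal ∧ g.Normal
  | _, _, .impIN2 _ d e => d.Normal ∧ e.Normal
  | _, _, .impIChat _ _ d => d.Normal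
  | _, _, .impIDhat _ _ d => d.Normal
  | _, _, .impIAnd _ d e => d.Normal ∧ e.Normal
  | _, _, .impIOr _ d e => d.Normal ∧ e.Normal
  | _, _, .impITr _ d e => d.Normal ∧ e.Normal


/-!
A restricted Hilbert derivation of `C` from `Γ` amounts to a theorem `⋀L → C` for a finite
list `L ⊆ Γ`. Every natural deduction rule of NWFC preserves this, by induction on the
derivation: ∨E becomes distributivity followed by (RD) under a common context `⋀K`, →I and
→E only involve derivations with at most one open assumption, hence theorems, the rules
→I₁, →I₂ are instances of (RE), and →∧I is the axiom C.
-/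

def Fml.top : Fml := Fml.bot.imp Fml.bot

def Fml.bigAnd : List Fml → Fml
  | [] => Fml.top
  | A :: L => A.and (Fml.bigAnd L)

variable {E : Set ExtAx}

namespace HThm

theorem top : HThm E Fml.top := ax8 _

theorem biimp_refl (A : Fml) : HThm E (A.biimp A) := conj (ax8 A) (ax8 A)

theorem bigAnd_imp_of_mem {A : Fml} {L : List Fml} (hA : A ∈ L) :
    HThm E ((Fml.bigAnd L).imp A) := by
  induction L with
  | nil => cases hA
  | cons B L ih =>
    rcases List.mem_cons.mp hA with rfl | hA
    · exact ax3 _ _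
    · exact tr (ax4 _ _) (ih hA)

theorem bigAnd_imp_bigAnd {K L : List Fml} (h : K ⊆ L) :
    HThm E ((Fml.bigAnd L).imp (Fml.bigAnd K)) := by
  induction K with
  | nil => exact af _ top
  | cons A K ih =>
    exact rc (bigAnd_imp_of_mem (h List.mem_cons_self))
      (ih fun _ hB => h (List.mem_cons_of_mem A hB))

theorem and_imp_of_bigAnd_imp {A C : Fml} {K L : List Fml} (hL : L ⊆ A :: K)
    (h : HThm E ((Fml.bigAnd L).imp C)) : HThm E (((Fml.bigAnd K).and A).imp C) :=
  tr (tr (rc (ax4 _ _) (ax3 _ _)) (bigAnd_imp_bigAnd hL)) h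

theorem imp_imp_right {A B D : Fml} (h : HThm E (B.biimp D)) :
    HThm E ((A.imp B).imp (A.imp D)) :=
  mp (re (biimp_refl A) h) (ax3 _ _)

theorem imp_imp_left {A B D : Fml} (h : HThm E (B.biimp D)) :
    HThm E ((B.imp A).imp (D.imp A)) :=
  mp (re h (biimp_refl A)) (ax3 _ _)

end HThm

namespace HDer

variable {Γ : Set Fml}

theorem bigAnd {L : List Fml} (hL : ∀ A ∈ L, A ∈ Γ) : HDer E Γ (Fml.bigAnd L) := by
  induction L with
  | nil => exact thm HThm.top
  | cons A L ih =>
    exact conj (hyp (hL A List.mem_cons_self))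
      (ih fun B hB => hL B (List.mem_cons_of_mem _ hB))

theorem exists_bigAnd_imp {C : Fml} (h : HDer E Γ C) :
    ∃ L : List Fml, (∀ A ∈ L, A ∈ Γ) ∧ HThm E ((Fml.bigAnd L).imp C) := by
  induction h with
  | hyp hC => exact ⟨[_], by simpa using hC, HThm.ax3 _ _⟩
  | thm hC => exact ⟨[], by simp, HThm.af _ hC⟩
  | conj _ _ ihA ihB =>
    obtain ⟨L₁, hL₁, h₁⟩ := ihA
    obtain ⟨L₂, hL₂, h₂⟩ := ihB
    refine ⟨L₁ ++ L₂, fun B hB => ?_, HThm.rc ?_ ?_⟩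
    · rcases List.mem_append.mp hB with hB | hB
      exacts [hL₁ B hB, hL₂ B hB]
    · exact HThm.tr (HThm.bigAnd_imp_bigAnd (List.subset_append_left _ _)) h₁
    · exact HThm.tr (HThm.bigAnd_imp_bigAnd (List.subset_append_right _ _)) h₂
  | mp _ hAB ih =>
    obtain ⟨L, hL, h⟩ := ih
    exact ⟨L, hL, HThm.tr h hAB⟩

theorem thm_of_empty {C : Fml} (h : HDer E ∅ C) : HThm E C := by
  obtain ⟨L, hL, hC⟩ := h.exists_bigAnd_imp
  obtain rfl : L = [] := List.eq_nil_iff_forall_not_mem.mpr hL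
  exact HThm.mp HThm.top hC

theorem thm_imp_of_singleton {A C : Fml} (h : HDer E {A} C) : HThm E (A.imp C) := by
  obtain ⟨L, hL, hC⟩ := h.exists_bigAnd_imp
  have hA : HThm E (A.imp (Fml.bigAnd [A])) := HThm.rc (HThm.ax8 A) (HThm.af A HThm.top)
  exact HThm.tr (HThm.tr hA (HThm.bigAnd_imp_bigAnd fun B hB => by simpa using hL B hB)) hC

theorem or_elim {A B C : Fml} (hAB : HDer E Γ (A.or B)) (hA : HDer E (insert A Γ) C)
    (hB : HDer E (insert B Γ) C) : HDer E Γ C := by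
  classical
  obtain ⟨L₁, hL₁, h₁⟩ := hA.exists_bigAnd_imp
  obtain ⟨L₂, hL₂, h₂⟩ := hB.exists_bigAnd_imp
  set K := (L₁ ++ L₂).filter (· ∈ Γ)
  have hK : ∀ D ∈ K, D ∈ Γ := fun D hD => by simpa using (List.mem_filter.mp hD).2
  have hsub : ∀ {L : List Fml} {X : Fml}, (∀ D ∈ L, D ∈ insert X Γ) →
      L ⊆ L₁ ++ L₂ → L ⊆ X :: K := by
    intro L X hL hLK D hD
    rcases hL D hD with rfl | hΓ
    · exact List.mem_cons_self
    · exact List.mem_cons_of_mem _ (List.mem_filter.mpr ⟨hLK hD, by simpa using hΓ⟩)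
  have hKA := HThm.and_imp_of_bigAnd_imp
    (hsub hL₁ (List.subset_append_left _ _)) h₁
  have hKB := HThm.and_imp_of_bigAnd_imp
    (hsub hL₂ (List.subset_append_right _ _)) h₂
  exact mp (conj (bigAnd hK) hAB) (HThm.tr (HThm.ax7 _ _ _) (HThm.rd hKA hKB))

end HDer

theorem Deriv.hDer {R : Set NRule} (hR : R ⊆ {NRule.impI1, NRule.impI2, NRule.impAnd})
    (hC : ExtAx.C ∈ E) {Γ : Set Fml} {A : Fml} (d : Deriv R Γ A) : HDer E Γ A := by
  induction d with
  | hyp _ _ hA => exact .hyp hA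
  | andI _ _ ihA ihB => exact .conj ihA ihB
  | andE1 _ ih => exact .mp ih (.ax3 _ _)
  | andE2 _ ih => exact .mp ih (.ax4 _ _)
  | orI1 _ _ ih => exact .mp ih (.ax1 _ _)
  | orI2 _ _ ih => exact .mp ih (.ax2 _ _)
  | orE _ _ _ ih ihA ihB => exact ih.or_elim ihA ihB
  | botE _ _ ih => exact .mp ih (.ax14 _)
  | impI _ ih => exact .thm ih.thm_imp_of_singleton
  | impE _ _ ih ihImp => exact .mp ih ihImp.thm_of_empty
  | impI1 _ _ _ ihBD ihDB =>
    exact .thm (.imp_imp_right (.conj ihBD.thm_imp_of_singleton ihDB.thm_imp_of_singleton))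
  | impI2 _ _ _ ihBD ihDB =>
    exact .thm (.imp_imp_left (.conj ihBD.thm_imp_of_singleton ihDB.thm_imp_of_singleton))
  | impIAnd _ _ _ ihB ihC => exact .mp (.conj ihB ihC) (.axC _ _ _ hC)
  | impIN hmem | impIN2 hmem | impIChat _ hmem | impIDhat _ hmem | impIOr hmem | impITr hmem =>
    exact absurd (hR hmem) (by simp)

theorem natded_to_hilbert_WFC (Γ : Set Fml) (A : Fml)
    (h : NDer {NRule.impI1, NRule.impI2, NRule.impAnd} Γ A) :
    HDer ({ExtAx.C} : Set ExtAx) Γ A :=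
  h.elim fun d => d.hDer subset_rfl (Set.mem_singleton _)
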